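/- arXiv:1212.1895 — 3 statements merged into one kernel-verified Lean document; each statement's English description precedes it below -/
import Mathlib

section
/- The affine-linear action of Sp(2g,F_2) on theta characteristics preserves the syzygy invariant: e(γ·m₁, γ·m₂, γ·m₃) = e(m₁,m₂,m₃) for all γ ∈ Sp(2g,F_2) and all triples of characteristics, where the action is γ·m = γ̃m + t(γ) with γ̃ = (D -C; -B A) and t(γ) = (diag(CᵗD), diag(AᵗB)). -/
open Finset

/-- The space of theta characteristics in genus `g`: pairs `(m', m'')` of vectors in `F_2^g`. -/
abbrev V (g : ℕ) := (Fin g → ZMod 2) × (Fin g → ZMod 2)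

/-- The `F_2`-inner product of two vectors. -/
def dotp {g : ℕ} (a b : Fin g → ZMod 2) : ZMod 2 := ∑ i, a i * b i

/-- The parity invariant `m'·m'' ∈ F_2`; `m` is even iff `par m = 0`. -/
def par {g : ℕ} (m : V g) : ZMod 2 := dotp m.1 m.2

/-- The sign `e(m) = (-1)^{m'·m''}`. -/
def e {g : ℕ} (m : V g) : ℤ := (-1) ^ (par m).val

/-- The syzygy invariant `e(m₁,m₂,m₃) = e(m₁)e(m₂)e(m₃)e(m₁+m₂+m₃)`. -/
def e3 {g : ℕ} (m₁ m₂ m₃ : V g) : ℤ := e m₁ * e m₂ * e m₃ * e (m₁ + m₂ + m₃)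

/-- The standard symplectic form `⟨m,n⟩ = m'·n'' + m''·n'` on `F_2^{2g}`. -/
def sp {g : ℕ} (m n : V g) : ZMod 2 := dotp m.1 n.2 + dotp m.2 n.1

/-- The standard linear action of a block matrix `(A B; C D)` on `F_2^g × F_2^g`. -/
def stdAct {g : ℕ} (A B C D : Matrix (Fin g) (Fin g) (ZMod 2)) (m : V g) : V g :=
  (A.mulVec m.1 + B.mulVec m.2, C.mulVec m.1 + D.mulVec m.2)

/-- `(A B; C D)` belongs to `Sp(2g, F_2)`: it preserves the symplectic form. -/
def IsSymp {g : ℕ} (A B C D : Matrix (Fin g) (Fin g) (ZMod 2)) : Prop :=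
  ∀ m n : V g, sp (stdAct A B C D m) (stdAct A B C D n) = sp m n

/-- The linear part `(D -C; -B A)` of the action on characteristics (signs are
irrelevant over `F_2`). -/
def twist {g : ℕ} (A B C D : Matrix (Fin g) (Fin g) (ZMod 2)) (m : V g) : V g :=
  (D.mulVec m.1 + C.mulVec m.2, B.mulVec m.1 + A.mulVec m.2)

/-- The translation part `(diag(CᵗD), diag(AᵗB))` of the action on characteristics. -/
def trvec {g : ℕ} (A B C D : Matrix (Fin g) (Fin g) (ZMod 2)) : V g :=
  (fun i => (C.transpose * D) i i, fun i => (A.transpose * B) i i)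

/-- The affine-linear action `γ·m = γ̃ m + t(γ)` of `Sp(2g,F_2)` on theta characteristics. -/
def act {g : ℕ} (A B C D : Matrix (Fin g) (Fin g) (ZMod 2)) (m : V g) : V g :=
  twist A B C D m + trvec A B C D

/-! The parity `par` is a quadratic form on `F_2^{2g}` polarizing to the symplectic form `sp`, so
`e(m₁,m₂,m₃) = (-1)^{⟨m₁,m₂⟩ + ⟨m₁,m₃⟩ + ⟨m₂,m₃⟩}`. This expression is unchanged by a common
translation (each cross term with the translation vector occurs twice) and by any map preserving
`sp`. The linear part `γ̃` is `γ` conjugated by the swap `(m', m'') ↦ (m'', m')`, which preserves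
`sp`, so `γ̃` is symplectic together with `γ`. -/

section
variable {g : ℕ}

lemma dotp_add_left (a b c : Fin g → ZMod 2) : dotp (a + b) c = dotp a c + dotp b c := by
  simp only [dotp, Pi.add_apply, add_mul, sum_add_distrib]

lemma dotp_comm (a b : Fin g → ZMod 2) : dotp a b = dotp b a := by
  simp only [dotp, mul_comm]

lemma sp_comm (m n : V g) : sp m n = sp n m := by
  rw [sp, sp, dotp_comm m.1, dotp_comm m.2, add_comm]

lemma sp_add_left (m n p : V g) : sp (m + n) p = sp m p + sp n p := by
  simp only [sp, Prod.fst_add, Prod.snd_add, dotp_add_left]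
  ring

lemma sp_add_right (m n p : V g) : sp m (n + p) = sp m n + sp m p := by
  rw [sp_comm, sp_add_left, sp_comm n, sp_comm p]

lemma sp_self (m : V g) : sp m m = 0 := by
  rw [sp, dotp_comm m.2, CharTwo.add_self_eq_zero]

lemma sp_swap (m n : V g) : sp m.swap n.swap = sp m n := by
  rw [sp, sp, Prod.fst_swap, Prod.snd_swap, Prod.fst_swap, Prod.snd_swap, add_comm]

lemma par_add (m n : V g) : par (m + n) = par m + par n + sp m n := by
  simp only [par, sp, dotp, Prod.fst_add, Prod.snd_add, Pi.add_apply, ← sum_add_distrib]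
  exact sum_congr rfl fun i _ => by ring

lemma neg_one_pow_val_add (a b : ZMod 2) :
    (-1 : ℤ) ^ (a + b).val = (-1) ^ a.val * (-1) ^ b.val := by
  rw [ZMod.val_add, ← neg_one_pow_eq_pow_mod_two, pow_add]

lemma e3_eq_neg_one_pow_sp (m₁ m₂ m₃ : V g) :
    e3 m₁ m₂ m₃ = (-1 : ℤ) ^ (sp m₁ m₂ + sp m₁ m₃ + sp m₂ m₃).val := by
  have hpar : par (m₁ + m₂ + m₃)
      = par m₁ + par m₂ + par m₃ + (sp m₁ m₂ + sp m₁ m₃ + sp m₂ m₃) := by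
    rw [par_add, par_add, sp_add_left]
    ring
  have hsign (p₁ p₂ p₃ t : ZMod 2) : (-1 : ℤ) ^ p₁.val * (-1) ^ p₂.val * (-1) ^ p₃.val *
      (-1) ^ (p₁ + p₂ + p₃ + t).val = (-1) ^ t.val := by
    simp only [neg_one_pow_val_add]
    ring_nf
    simp only [pow_mul', neg_one_sq, one_pow, one_mul]
  rw [e3, e, e, e, e, hpar, hsign]

lemma e3_add_const (m₁ m₂ m₃ t : V g) : e3 (m₁ + t) (m₂ + t) (m₃ + t) = e3 m₁ m₂ m₃ := by
  simp only [e3_eq_neg_one_pow_sp, sp_add_left, sp_add_right, sp_self, sp_comm t]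
  congr 2
  grind

lemma e3_map_of_sp_map {f : V g → V g} (hf : ∀ m n, sp (f m) (f n) = sp m n)
    (m₁ m₂ m₃ : V g) : e3 (f m₁) (f m₂) (f m₃) = e3 m₁ m₂ m₃ := by
  simp only [e3_eq_neg_one_pow_sp, hf]

lemma twist_eq_swap_stdAct_swap (A B C D : Matrix (Fin g) (Fin g) (ZMod 2)) (m : V g) :
    twist A B C D m = (stdAct A B C D m.swap).swap := by
  simp only [twist, stdAct, Prod.swap, add_comm]

lemma sp_twist {A B C D : Matrix (Fin g) (Fin g) (ZMod 2)} (h : IsSymp A B C D) (m n : V g) :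
    sp (twist A B C D m) (twist A B C D n) = sp m n := by
  rw [twist_eq_swap_stdAct_swap, twist_eq_swap_stdAct_swap, sp_swap, h, sp_swap]

end

theorem syzygy_invariant_under_Sp (g : ℕ) (A B C D : Matrix (Fin g) (Fin g) (ZMod 2))
    (h : IsSymp A B C D) (m₁ m₂ m₃ : V g) :
    e3 (act A B C D m₁) (act A B C D m₂) (act A B C D m₃) = e3 m₁ m₂ m₃ := by
  simp only [act]
  rw [e3_add_const, e3_map_of_sp_map (sp_twist h)]
end

section
/- Let n₀, m₁, ..., m₇ be a fundamental system in genus 3 (8 characteristics, every triple azygetic, with n₀ even and all mᵢ odd). Then the 21 sums n₀ + mᵢ + mⱼ (1 ≤ i < j ≤ 7) are pairwise distinct odd characteristics, distinct from m₁,...,m₇, and together with m₁,...,m₇ they exhaust all 28 odd characteristics of F_2^6. -/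
/-!
Azygy of a triple `a, b, c` says `par (a + b + c) = par a + par b + par c + 1`. Hence three
distinct `mᵢ` sum to an even characteristic and every `n₀ + mᵢ + mⱼ` is odd. An equality
`mᵢ + mⱼ = mₖ + mₗ` between different pairs would make the odd `mₗ` a sum of three distinct `mᵢ`,
and `n₀ + mᵢ + mⱼ = mₖ` forces `n₀ = mᵢ + mⱼ + mₖ`, which a fourth index `l` refutes. This gives
`7 + 21 = 28` distinct odd characteristics, and there are exactly `28`.
-/

open Finset

section Parity

variable {g : ℕ}

lemma e_mul_self (x : V g) : e x * e x = 1 := by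
  rw [e, ← pow_add, ← two_mul, pow_mul]; simp

lemma e3_eq_neg_one_iff (a b c : V g) :
    e3 a b c = -1 ↔ par (a + b + c) = par a + par b + par c + 1 := by
  unfold e3 e
  generalize par (a + b + c) = d
  generalize par a = x; generalize par b = y; generalize par c = z
  revert x y z d; decide

lemma e3_self_left (a c : V g) : e3 a a c = 1 := by
  rw [e3, ZModModule.add_self, zero_add, mul_assoc, e_mul_self, e_mul_self, one_mul]

lemma par_add_add_of_odd {a b c : V g} (h : e3 a b c = -1)
    (ha : par a = 1) (hb : par b = 1) (hc : par c = 1) : par (a + b + c) = 0 := by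
  rw [(e3_eq_neg_one_iff a b c).mp h, ha, hb, hc]; decide

lemma par_add_add_of_even_of_odd {n a b : V g} (h : e3 n a b = -1)
    (hn : par n = 0) (ha : par a = 1) (hb : par b = 1) : par (n + a + b) = 1 := by
  rw [(e3_eq_neg_one_iff n a b).mp h, hn, ha, hb]; decide

end Parity

section Family

variable {g : ℕ} {ι : Type*} {m : ι → V g}

lemma injective_of_e3_eq_neg_one
    (haz : ∀ i j k, i ≠ j → i ≠ k → j ≠ k → e3 (m i) (m j) (m k) = -1)
    (hthird : ∀ i j : ι, ∃ k, k ≠ i ∧ k ≠ j) : Function.Injective m := by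
  intro i j hij
  by_contra hne
  obtain ⟨k, hki, hkj⟩ := hthird i j
  have h := haz i j k hne hki.symm hkj.symm
  rw [hij, e3_self_left] at h
  exact absurd h (by decide)

lemma eq_and_eq_or_eq_and_eq_of_add_eq_add (hinj : Function.Injective m)
    (hm : ∀ i, par (m i) = 1)
    (haz : ∀ i j k, i ≠ j → i ≠ k → j ≠ k → e3 (m i) (m j) (m k) = -1)
    {i j k l : ι} (hij : i ≠ j) (h : m i + m j = m k + m l) :
    i = k ∧ j = l ∨ i = l ∧ j = k := by
  have hl : m i + m j + m k = m l := by
    rw [h, add_right_comm, ZModModule.add_self, zero_add]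
  by_cases hki : k = i
  · subst hki
    rw [add_right_comm, ZModModule.add_self, zero_add] at hl
    exact Or.inl ⟨rfl, hinj hl⟩
  by_cases hkj : k = j
  · subst hkj
    rw [add_assoc, ZModModule.add_self, add_zero] at hl
    exact Or.inr ⟨hinj hl, rfl⟩
  have h0 := par_add_add_of_odd (haz i j k hij (Ne.symm hki) (Ne.symm hkj)) (hm i) (hm j) (hm k)
  rw [hl, hm l] at h0
  exact absurd h0 one_ne_zero

lemma add_add_ne_of_e3_eq_neg_one {n₀ : V g} (hn : par n₀ = 0) (hm : ∀ i, par (m i) = 1)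
    (haz₁ : ∀ i j k, i ≠ j → i ≠ k → j ≠ k → e3 (m i) (m j) (m k) = -1)
    (haz₂ : ∀ i j, i ≠ j → e3 n₀ (m i) (m j) = -1)
    (hfourth : ∀ i j k : ι, ∃ l, l ≠ i ∧ l ≠ j ∧ l ≠ k) {i j : ι} (hij : i ≠ j) (k : ι) :
    n₀ + m i + m j ≠ m k := by
  intro h
  have hn₀ : n₀ = m i + m j + m k := by
    rw [← h, add_assoc n₀, add_left_comm, ZModModule.add_self, add_zero]
  by_cases hki : k = i
  · subst hki
    rw [add_right_comm, ZModModule.add_self, zero_add] at hn₀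
    exact zero_ne_one (hn.symm.trans (hn₀ ▸ hm j))
  by_cases hkj : k = j
  · subst hkj
    rw [add_assoc, ZModModule.add_self, add_zero] at hn₀
    exact zero_ne_one (hn.symm.trans (hn₀ ▸ hm i))
  -- for a fourth index `l`, `n₀ + mᵢ + mₗ = mⱼ + mₖ + mₗ` is odd by `haz₂` and even by `haz₁`
  obtain ⟨l, hli, hlj, hlk⟩ := hfourth i j k
  have hodd := par_add_add_of_even_of_odd (haz₂ i l hli.symm) hn (hm i) (hm l)
  have heven := par_add_add_of_odd (haz₁ j k l (Ne.symm hkj) hlj.symm hlk.symm) (hm j) (hm k) (hm l)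
  rw [hn₀, add_assoc (m i), add_comm (m i), add_assoc (m j + m k), ZModModule.add_self,
    add_zero, heven] at hodd
  exact zero_ne_one hodd

end Family

lemma card_filter_lt_le_card_image {ι α : Type*} [Fintype ι] [LinearOrder ι] [DecidableEq α]
    (f : ι → ι → α) (hf : ∀ i j k l, i < j → k < l → f i j = f k l → i = k ∧ j = l) :
    #(univ.filter fun p : ι × ι => p.1 < p.2) ≤
      #((univ.filter fun p : ι × ι => p.1 ≠ p.2).image fun p => f p.1 p.2) := by
  calc #(univ.filter fun p : ι × ι => p.1 < p.2)
      = #((univ.filter fun p : ι × ι => p.1 < p.2).image fun p => f p.1 p.2) := by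
        refine (card_image_of_injOn fun p hp q hq hpq => ?_).symm
        rw [mem_coe, mem_filter] at hp hq
        obtain ⟨h₁, h₂⟩ := hf _ _ _ _ hp.2 hq.2 hpq
        exact Prod.ext h₁ h₂
    _ ≤ _ := card_le_card (image_subset_image (monotone_filter_right _ fun _ _ h => h.ne))

lemma card_filter_fst_lt_snd : #(univ.filter fun p : Fin 7 × Fin 7 => p.1 < p.2) = 21 := by
  decide

lemma card_filter_par_eq_one : #(univ.filter fun x : V 3 => par x = 1) = 28 := by
  decide

theorem fundamental_system_odd_characteristics_general (n₀ : V 3) (m : Fin 7 → V 3)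
    (hn : par n₀ = 0) (hm : ∀ i, par (m i) = 1)
    (haz₁ : ∀ i j k : Fin 7, i ≠ j → i ≠ k → j ≠ k → e3 (m i) (m j) (m k) = -1)
    (haz₂ : ∀ i j : Fin 7, i ≠ j → e3 n₀ (m i) (m j) = -1) :
    (∀ i j k l : Fin 7, i ≠ j → k ≠ l → n₀ + m i + m j = n₀ + m k + m l →
      ({i, j} : Finset (Fin 7)) = {k, l}) ∧
    (∀ i j : Fin 7, i ≠ j → par (n₀ + m i + m j) = 1 ∧ ∀ k, n₀ + m i + m j ≠ m k) ∧
    (univ.image m ∪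
        (univ.filter (fun p : Fin 7 × Fin 7 => p.1 ≠ p.2)).image
          (fun p => n₀ + m p.1 + m p.2) =
      univ.filter (fun x : V 3 => par x = 1)) ∧
    (univ.filter (fun x : V 3 => par x = 1)).card = 28 := by
  have hinj : Function.Injective m := injective_of_e3_eq_neg_one haz₁ (by decide)
  have hpair : ∀ i j k l : Fin 7, i ≠ j → n₀ + m i + m j = n₀ + m k + m l →
      i = k ∧ j = l ∨ i = l ∧ j = k := fun i j k l hij h =>
    eq_and_eq_or_eq_and_eq_of_add_eq_add hinj hm haz₁ hij
      (by simpa only [add_assoc, add_right_inj] using h)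
  have hodd : ∀ i j, i ≠ j → par (n₀ + m i + m j) = 1 := fun i j hij =>
    par_add_add_of_even_of_odd (haz₂ i j hij) hn (hm i) (hm j)
  have hne : ∀ i j, i ≠ j → ∀ k, n₀ + m i + m j ≠ m k := fun i j hij =>
    add_add_ne_of_e3_eq_neg_one hn hm haz₁ haz₂ (by decide) hij
  refine ⟨fun i j k l hij _ h => ?_, fun i j hij => ⟨hodd i j hij, hne i j hij⟩, ?_,
    card_filter_par_eq_one⟩
  · rcases hpair i j k l hij h with ⟨rfl, rfl⟩ | ⟨rfl, rfl⟩
    · rfl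
    · exact pair_comm _ _
  refine eq_of_subset_of_card_le ?_ ?_
  · simp only [subset_iff, mem_union, mem_image, mem_filter, mem_univ, true_and]
    rintro _ (⟨i, rfl⟩ | ⟨p, hp, rfl⟩)
    exacts [hm i, hodd p.1 p.2 hp]
  rw [card_union_of_disjoint ?_, card_image_of_injective _ hinj, card_filter_par_eq_one,
    card_univ, Fintype.card_fin]
  · have hpairs := card_filter_lt_le_card_image (fun i j => n₀ + m i + m j)
      fun i j k l hij hkl h => (hpair i j k l hij.ne h).resolve_right fun ⟨hil, hjk⟩ =>
        lt_asymm (hil ▸ hjk ▸ hij) hkl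
    rw [card_filter_fst_lt_snd] at hpairs
    omega
  · simp only [disjoint_left, mem_image, mem_filter, mem_univ, true_and]
    rintro _ ⟨k, rfl⟩ ⟨p, hp, hpk⟩
    exact hne p.1 p.2 hp k hpk

theorem fundamental_system_odd_characteristics (n₀ : V 3) (m : Fin 7 → V 3)
    (hn : par n₀ = 0) (hm : ∀ i, par (m i) = 1)
    (hinj : Function.Injective m) (hne : ∀ i, n₀ ≠ m i)
    (haz₁ : ∀ i j k : Fin 7, i ≠ j → i ≠ k → j ≠ k → e3 (m i) (m j) (m k) = -1)
    (haz₂ : ∀ i j : Fin 7, i ≠ j → e3 n₀ (m i) (m j) = -1) :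
    (∀ i j k l : Fin 7, i ≠ j → k ≠ l → n₀ + m i + m j = n₀ + m k + m l →
      ({i, j} : Finset (Fin 7)) = {k, l}) ∧
    (∀ i j : Fin 7, i ≠ j → par (n₀ + m i + m j) = 1 ∧ ∀ k, n₀ + m i + m j ≠ m k) ∧
    (univ.image m ∪
        (univ.filter (fun p : Fin 7 × Fin 7 => p.1 ≠ p.2)).image
          (fun p => n₀ + m p.1 + m p.2) =
      univ.filter (fun x : V 3 => par x = 1)) ∧
    (univ.filter (fun x : V 3 => par x = 1)).card = 28 :=
  fundamental_system_odd_characteristics_general n₀ m hn hm haz₁ haz₂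
end

section
/- Let m₁,...,m₇ be the Aronhold set (111,111), (110,100), (101,001), (100,110), (010,011), (001,101), (011,010), and let F = {(123),(145),(167),(247),(256),(346),(357)} be a set of seven 3-element subsets of {1,...,7} such that any two intersect in exactly one element. Then the seven triple sums m_i + m_j + m_k for (ijk) ∈ F, together with 0, form a Lagrangian subspace of F_2^6 consisting entirely of even characteristics. -/
/-!
The seven triple sums are `(1,0,0 | 0,0,0)`, `(0,0,1 | 0,1,0)`, …: exactly the nonzero
characteristics `(m', m'')` with `m'` supported on the coordinates `{1, 3}` (`{0, 2}` in `Fin 3`)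
and `m''` on the complementary coordinate `{2}`. Splitting a vector `c ∈ F_2^g` along a set `s` of
coordinates into `(c|_s, c|_{sᶜ})` pairs every coordinate of `m'` with a zero of `m''`, so all such
characteristics are even and mutually orthogonal; the splitting map is injective, so they form a
`g`-dimensional subspace.
-/

open Finset

def splitAlong {g : ℕ} (s : Finset (Fin g)) : (Fin g → ZMod 2) →ₗ[ZMod 2] V g where
  toFun c := (fun i => if i ∈ s then c i else 0, fun i => if i ∈ s then 0 else c i)
  map_add' c d := by ext i <;> by_cases hi : i ∈ s <;> simp [hi]
  map_smul' a c := by ext i <;> by_cases hi : i ∈ s <;> simp [hi]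

section splitAlong

variable {g : ℕ} (s : Finset (Fin g))

theorem dotp_splitAlong_fst_snd (c d : Fin g → ZMod 2) :
    dotp (splitAlong s c).1 (splitAlong s d).2 = 0 := by
  refine Finset.sum_eq_zero fun i _ => ?_
  by_cases hi : i ∈ s <;> simp [splitAlong, hi]

theorem sp_splitAlong (c d : Fin g → ZMod 2) : sp (splitAlong s c) (splitAlong s d) = 0 := by
  have hswap : dotp (splitAlong s c).2 (splitAlong s d).1
      = dotp (splitAlong s d).1 (splitAlong s c).2 :=
    Finset.sum_congr rfl fun _ _ => mul_comm _ _
  rw [sp, hswap, dotp_splitAlong_fst_snd, dotp_splitAlong_fst_snd, add_zero]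

theorem par_splitAlong (c : Fin g → ZMod 2) : par (splitAlong s c) = 0 :=
  dotp_splitAlong_fst_snd s c c

theorem splitAlong_injective : Function.Injective (splitAlong s) := by
  intro c d h
  ext i
  by_cases hi : i ∈ s
  · simpa [splitAlong, hi] using congr_fun (congr_arg Prod.fst h) i
  · simpa [splitAlong, hi] using congr_fun (congr_arg Prod.snd h) i

theorem finrank_range_splitAlong : Module.finrank (ZMod 2) (LinearMap.range (splitAlong s)) = g := by
  rw [LinearMap.finrank_range_of_inj (splitAlong_injective s), Module.finrank_fin_fun]

end splitAlong

theorem aronhold_triple_sums_fano :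
    let m₁ : V 3 := (![1,1,1], ![1,1,1])
    let m₂ : V 3 := (![1,1,0], ![1,0,0])
    let m₃ : V 3 := (![1,0,1], ![0,0,1])
    let m₄ : V 3 := (![1,0,0], ![1,1,0])
    let m₅ : V 3 := (![0,1,0], ![0,1,1])
    let m₆ : V 3 := (![0,0,1], ![1,0,1])
    let m₇ : V 3 := (![0,1,1], ![0,1,0])
    ∃ L : Submodule (ZMod 2) (V 3),
      (L : Set (V 3)) =
        {0, m₁ + m₂ + m₃, m₁ + m₄ + m₅, m₁ + m₆ + m₇, m₂ + m₄ + m₇,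
         m₂ + m₅ + m₆, m₃ + m₄ + m₆, m₃ + m₅ + m₇} ∧
      Module.finrank (ZMod 2) L = 3 ∧
      (∀ m ∈ L, ∀ n ∈ L, sp m n = 0) ∧
      (∀ m ∈ L, par m = 0) := by
  intro m₁ m₂ m₃ m₄ m₅ m₆ m₇
  refine ⟨LinearMap.range (splitAlong {0, 2}), ?_, finrank_range_splitAlong _, ?_, ?_⟩
  · rw [LinearMap.coe_range, ← Set.image_univ, ← Finset.coe_univ, ← Finset.coe_image]
    simp only [← Finset.coe_singleton, ← Finset.coe_insert, Finset.coe_inj]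
    decide
  · rintro _ ⟨c, rfl⟩ _ ⟨d, rfl⟩
    exact sp_splitAlong _ c d
  · rintro _ ⟨c, rfl⟩
    exact par_splitAlong _ c
end
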